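/- arXiv:2406.07414 — 7 statements merged into one kernel-verified Lean document; each statement's English description precedes it below -/
import Mathlib

section
/- Let Γ be a linearly ordered abelian group and Γ⁺ its monoid of non-negative elements. The map sending a prime ideal p ⊆ Γ⁺ (allowing the empty ideal, excluding p = Γ⁺) to H_p = Γ \ (p ∪ (−p)) is a bijection between the set of prime ideals of Γ⁺ and the set of convex subgroups of Γ. -/
/-- A prime ideal of the monoid of non-negative elements (allowing the empty ideal,
excluding the whole monoid). -/
def IsPrimeIdealOfPosCone {Γ : Type*} [AddCommGroup Γ] [LinearOrder Γ] [IsOrderedAddMonoid Γ] (p : Set Γ) : Prop :=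
  p ⊆ {γ : Γ | 0 ≤ γ} ∧ p ≠ {γ : Γ | 0 ≤ γ} ∧
    (∀ γ ∈ p, ∀ δ : Γ, 0 ≤ δ → γ + δ ∈ p) ∧
    (∀ γ δ : Γ, 0 ≤ γ → 0 ≤ δ → γ + δ ∈ p → γ ∈ p ∨ δ ∈ p)

/-- A convex subgroup of a linearly ordered abelian group, as a set. -/
def IsConvexSubgroupSet {Γ : Type*} [AddCommGroup Γ] [LinearOrder Γ] [IsOrderedAddMonoid Γ] (H : Set Γ) : Prop :=
  (0 : Γ) ∈ H ∧ (∀ x ∈ H, ∀ y ∈ H, x + y ∈ H) ∧ (∀ x ∈ H, -x ∈ H) ∧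
    (∀ x h : Γ, h ∈ H → 0 ≤ x → x ≤ h → x ∈ H)

/-!
The inverse map sends a convex subgroup `H` to `{γ > 0 | γ ∉ H}`. Everything rests on the
observation that, for a prime ideal `p`, `γ ∈ H_p ↔ |γ| ∉ p`: then `H_p` is closed under addition
because `|x + y| ≤ |x| + |y|`, `p` is upward closed in `Γ⁺`, and `|x| + |y| ∉ p` by primality.
-/

section

variable {Γ : Type*} [AddCommGroup Γ] [LinearOrder Γ] [IsOrderedAddMonoid Γ]

def convexSubgroupOfPrime (p : Set Γ) : Set Γ := {γ | γ ∉ p ∧ -γ ∉ p}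

def primeOfConvexSubgroup (H : Set Γ) : Set Γ := {γ | 0 < γ ∧ γ ∉ H}

namespace IsPrimeIdealOfPosCone

variable {p : Set Γ}

theorem zero_notMem (hp : IsPrimeIdealOfPosCone p) : (0 : Γ) ∉ p := fun h0 =>
  hp.2.1 <| hp.1.antisymm fun δ hδ => by simpa using hp.2.2.1 0 h0 δ hδ

theorem pos_of_mem (hp : IsPrimeIdealOfPosCone p) {γ : Γ} (hγ : γ ∈ p) : 0 < γ :=
  (hp.1 hγ).lt_of_ne fun h => hp.zero_notMem (h ▸ hγ)

theorem mem_of_le (hp : IsPrimeIdealOfPosCone p) {a b : Γ} (ha : a ∈ p) (hab : a ≤ b) :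
    b ∈ p := by
  simpa using hp.2.2.1 a ha (b - a) (sub_nonneg.mpr hab)

theorem neg_notMem_of_nonneg (hp : IsPrimeIdealOfPosCone p) {γ : Γ} (hγ : 0 ≤ γ) :
    -γ ∉ p := fun h =>
  (hp.pos_of_mem h).not_ge (neg_nonpos.mpr hγ)

theorem mem_convexSubgroupOfPrime_iff (hp : IsPrimeIdealOfPosCone p) (γ : Γ) :
    γ ∈ convexSubgroupOfPrime p ↔ |γ| ∉ p := by
  rcases le_total 0 γ with hγ | hγ
  · simp [convexSubgroupOfPrime, abs_of_nonneg hγ, hp.neg_notMem_of_nonneg hγ]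
  · have : γ ∉ p := by simpa using hp.neg_notMem_of_nonneg (neg_nonneg.mpr hγ)
    simp [convexSubgroupOfPrime, abs_of_nonpos hγ, this]

theorem isConvexSubgroupSet_convexSubgroupOfPrime (hp : IsPrimeIdealOfPosCone p) :
    IsConvexSubgroupSet (convexSubgroupOfPrime p) := by
  simp only [IsConvexSubgroupSet, hp.mem_convexSubgroupOfPrime_iff, abs_zero, abs_neg]
  refine ⟨hp.zero_notMem, fun x hx y hy hxy => ?_, fun x hx => hx,
    fun x h hh hx hxh hxp => hh (hp.mem_of_le hxp ?_)⟩
  · have : |x| + |y| ∈ p := hp.mem_of_le hxy (abs_add_le x y)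
    rcases hp.2.2.2 _ _ (abs_nonneg x) (abs_nonneg y) this with h | h
    exacts [hx h, hy h]
  · rw [abs_of_nonneg hx]
    exact hxh.trans (le_abs_self h)

theorem primeOfConvexSubgroup_convexSubgroupOfPrime (hp : IsPrimeIdealOfPosCone p) :
    primeOfConvexSubgroup (convexSubgroupOfPrime p) = p := by
  ext γ
  simp only [primeOfConvexSubgroup, hp.mem_convexSubgroupOfPrime_iff, not_not]
  exact ⟨fun ⟨hγ, h⟩ => abs_of_pos hγ ▸ h,
    fun h => ⟨hp.pos_of_mem h, (abs_of_pos (hp.pos_of_mem h)).symm ▸ h⟩⟩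

end IsPrimeIdealOfPosCone

namespace IsConvexSubgroupSet

variable {H : Set Γ}

theorem abs_mem_iff (hH : IsConvexSubgroupSet H) (γ : Γ) : |γ| ∈ H ↔ γ ∈ H := by
  rcases abs_choice γ with h | h <;> rw [h]
  exact ⟨fun h => neg_neg γ ▸ hH.2.2.1 _ h, hH.2.2.1 γ⟩

theorem mem_primeOfConvexSubgroup_iff (hH : IsConvexSubgroupSet H) {γ : Γ} (hγ : 0 ≤ γ) :
    γ ∈ primeOfConvexSubgroup H ↔ γ ∉ H :=
  ⟨And.right, fun h => ⟨hγ.lt_of_ne fun h0 => h (h0 ▸ hH.1), h⟩⟩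

theorem isPrimeIdealOfPosCone_primeOfConvexSubgroup (hH : IsConvexSubgroupSet H) :
    IsPrimeIdealOfPosCone (primeOfConvexSubgroup H) := by
  refine ⟨fun γ hγ => hγ.1.le, fun h => ?_, fun γ hγ δ hδ => ?_, fun γ δ hγ hδ => ?_⟩
  · have : (0 : Γ) ∈ primeOfConvexSubgroup H := h ▸ le_refl (0 : Γ)
    exact this.1.false
  · rw [hH.mem_primeOfConvexSubgroup_iff (add_nonneg hγ.1.le hδ)]
    exact fun h => hγ.2 (hH.2.2.2 γ _ h hγ.1.le (le_add_of_nonneg_right hδ))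
  · rw [hH.mem_primeOfConvexSubgroup_iff hγ, hH.mem_primeOfConvexSubgroup_iff hδ,
      hH.mem_primeOfConvexSubgroup_iff (add_nonneg hγ hδ)]
    by_contra! h
    exact h.1 (hH.2.1 γ h.2.1 δ h.2.2)

theorem convexSubgroupOfPrime_primeOfConvexSubgroup (hH : IsConvexSubgroupSet H) :
    convexSubgroupOfPrime (primeOfConvexSubgroup H) = H := by
  ext γ
  rw [hH.isPrimeIdealOfPosCone_primeOfConvexSubgroup.mem_convexSubgroupOfPrime_iff,
    hH.mem_primeOfConvexSubgroup_iff (abs_nonneg γ), not_not, hH.abs_mem_iff]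

end IsConvexSubgroupSet

end

/-- The map `p ↦ H_p = Γ \ (p ∪ (−p))` is a bijection between prime ideals of `Γ⁺`
and convex subgroups of `Γ`. -/
theorem stmt_1 {Γ : Type*} [AddCommGroup Γ] [LinearOrder Γ] [IsOrderedAddMonoid Γ] :
    Set.BijOn (fun p : Set Γ => {γ : Γ | γ ∉ p ∧ -γ ∉ p})
      {p : Set Γ | IsPrimeIdealOfPosCone p}
      {H : Set Γ | IsConvexSubgroupSet H} :=
  Set.InvOn.bijOn (f' := primeOfConvexSubgroup)
    ⟨fun _ hp => IsPrimeIdealOfPosCone.primeOfConvexSubgroup_convexSubgroupOfPrime hp,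
      fun _ hH => IsConvexSubgroupSet.convexSubgroupOfPrime_primeOfConvexSubgroup hH⟩
    (fun _ hp => IsPrimeIdealOfPosCone.isConvexSubgroupSet_convexSubgroupOfPrime hp)
    (fun _ hH => IsConvexSubgroupSet.isPrimeIdealOfPosCone_primeOfConvexSubgroup hH)
end

section
/- Let G be an abelian group and M ⊆ G a submonoid. Then the saturation of M in G (the set of f ∈ G such that n•f ∈ M for some positive integer n) equals the intersection of all valuation monoids of G containing M. -/
/-- A valuation monoid of an abelian group `G`: a submonoid `V` (as a set) such that
`g ∈ V` or `−g ∈ V` for every `g`. -/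
def IsValuationMonoid {G : Type*} [AddCommGroup G] (V : Set G) : Prop :=
  (0 : G) ∈ V ∧ (∀ a ∈ V, ∀ b ∈ V, a + b ∈ V) ∧ (∀ g : G, g ∈ V ∨ -g ∈ V)

/-- The saturation of a submonoid `M` in `G` equals the intersection of all valuation
monoids of `G` containing `M`. -/
theorem stmt_4 {G : Type*} [AddCommGroup G] (M : AddSubmonoid G) :
    {f : G | ∃ n : ℕ, 0 < n ∧ n • f ∈ M} =
      ⋂₀ {V : Set G | (M : Set G) ⊆ V ∧ IsValuationMonoid V} := by
  ext f
  simp only [Set.mem_setOf_eq, Set.mem_sInter]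
  constructor
  · rintro ⟨n, hn, hnf⟩ V ⟨hMV, h0, hadd, hval⟩
    rcases hval f with hf | hf
    · exact hf
    · -- f = n • f + (n-1) • (-f)
      have hmem : ∀ k : ℕ, k • (-f) ∈ V := by
        intro k
        induction k with
        | zero => simpa using h0
        | succ k ih => rw [succ_nsmul]; exact hadd _ ih _ hf
      have : f = n • f + (n - 1) • (-f) := by
        have h1 : n • f = (n - 1) • f + f := by
          rw [← succ_nsmul, Nat.sub_add_cancel hn]
        rw [h1, smul_neg]
        abel
      rw [this]
      exact hadd _ (hMV hnf) _ (hmem _)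
  · intro hf
    by_contra hsat
    push_neg at hsat
    -- Zorn: maximal submonoid N ⊇ M with no positive multiple of f in N
    set s : Set (AddSubmonoid G) := {N | M ≤ N ∧ ∀ n : ℕ, 0 < n → n • f ∉ N} with hs
    obtain ⟨N, hMN, ⟨hNM, hNf⟩, hNmax⟩ :=
      zorn_le_nonempty₀ s (fun c hcs hc y hy => by
        refine ⟨sSup c, ⟨(hcs hy).1.trans (le_sSup hy), ?_⟩, fun z hz => le_sSup hz⟩
        intro n hn hmem
        rw [AddSubmonoid.mem_sSup_of_directedOn ⟨y, hy⟩ hc.directedOn] at hmem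
        obtain ⟨N, hNc, hmN⟩ := hmem
        exact (hcs hNc).2 n hn hmN) M ⟨le_rfl, fun n hn h => hsat n hn h⟩
    -- V := saturation of N is a valuation monoid
    set V : Set G := {g | ∃ n : ℕ, 0 < n ∧ n • g ∈ N} with hV
    have hVval : IsValuationMonoid V := by
      refine ⟨⟨1, one_pos, by simpa using N.zero_mem⟩, ?_, ?_⟩
      · rintro a ⟨n, hn, hna⟩ b ⟨m, hm, hmb⟩
        refine ⟨n * m, Nat.mul_pos hn hm, ?_⟩
        rw [smul_add]
        exact N.add_mem (by rw [mul_comm, mul_smul]; exact N.nsmul_mem hna m)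
          (by rw [mul_smul]; exact N.nsmul_mem hmb n)
      · intro g
        by_contra hg
        push_neg at hg
        obtain ⟨hg1, hg2⟩ := hg
        simp only [hV, Set.mem_setOf_eq, not_exists, not_and] at hg1 hg2
        -- N ⊔ closure {g} and N ⊔ closure {-g} both strictly contain N
        have key : ∀ x : G, (∀ k : ℕ, 0 < k → ¬ k • x ∈ N) →
            ∃ n m : G, ∃ k nn : ℕ, 0 < nn ∧ m ∈ N ∧ nn • f = m + k • x := by
          intro x hx
          have hlt : N < N ⊔ AddSubmonoid.closure {x} := by
            refine lt_of_le_of_ne le_sup_left (fun h => ?_)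
            have : x ∈ N := by
              rw [h]
              exact (le_sup_right : AddSubmonoid.closure {x} ≤ N ⊔ AddSubmonoid.closure {x})
                (AddSubmonoid.mem_closure_singleton.mpr ⟨1, one_nsmul x⟩)
            exact hx 1 one_pos (by simpa using this)
          have hns : N ⊔ AddSubmonoid.closure {x} ∉ s := fun h =>
            hlt.ne' (le_antisymm (hNmax h hlt.le) hlt.le)
          simp only [hs, Set.mem_setOf_eq, not_and, not_forall] at hns
          obtain ⟨nn, hnn, hmem⟩ := hns (hNM.trans le_sup_left)
          rw [not_not] at hmem
          rw [AddSubmonoid.mem_sup] at hmem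
          obtain ⟨m, hm, z, hz, hzeq⟩ := hmem
          rw [AddSubmonoid.mem_closure_singleton] at hz
          obtain ⟨k, hk⟩ := hz
          exact ⟨x, m, k, nn, hnn, hm, by rw [← hzeq, hk]⟩
        obtain ⟨_, m, k, n, hn, hm, heq⟩ := key g hg1
        obtain ⟨_, m', k', n', hn', hm', heq'⟩ := key (-g) hg2
        -- combine: (k' * n + k * n') • f = k' • m + k • m' ∈ N
        have hcomb : (k' * n + k * n') • f = k' • m + k • m' := by
          rw [add_smul, mul_smul, mul_smul, heq, heq']
          simp only [smul_add, smul_neg, smul_smul]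
          rw [mul_comm k k']
          abel
        rcases Nat.eq_zero_or_pos k with rfl | hk
        · exact hNf n hn (by rw [heq, zero_smul, add_zero]; exact hm)
        rcases Nat.eq_zero_or_pos k' with rfl | hk'
        · exact hNf n' hn' (by rw [heq', zero_smul, add_zero]; exact hm')
        exact hNf _ (by positivity) (hcomb ▸ N.add_mem (N.nsmul_mem hm k') (N.nsmul_mem hm' k))
    have hMV : (M : Set G) ⊆ V := fun x hx => ⟨1, one_pos, by simpa using hNM hx⟩
    obtain ⟨n, hn, hnf⟩ := hf V ⟨hMV, hVval⟩
    exact hNf n hn hnf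
end

section
/- Let Γ be a divisible linearly ordered abelian group and let A ⊆ Γ be a cut: A is nonempty and downward closed, its complement is nonempty, A has no maximum, and Γ \ A has no minimum. Then the set p = {γ ∈ Γ : γ > 0 and A + γ ≠ A} is a saturated (equivalently, prime) ideal of the monoid of positive elements: it is closed under adding arbitrary non-negative elements, and for every positive integer n and γ > 0, if n•γ ∈ p then γ ∈ p. -/
/-!
For a lower set `A` and `γ ≥ 0` we have `A + γ = A` as soon as `A + γ ⊆ A`, because every
`a ∈ A` is `(a - γ) + γ` with `a - γ ≤ a`. The translations with `A + γ ⊆ A` are closed under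
addition and, `A` being a lower set, under passing to smaller elements; hence their complement
among the positive elements absorbs non-negative summands, and it is saturated because
`A + γ ⊆ A` iterates to `A + n • γ ⊆ A`.
-/

open Set

namespace IsLowerSet

variable {Γ : Type*} [AddCommGroup Γ] [PartialOrder Γ] [IsOrderedAddMonoid Γ] {A : Set Γ}

theorem image_add_right_eq_iff_mapsTo (hA : IsLowerSet A) {γ : Γ} (hγ : 0 ≤ γ) :
    (· + γ) '' A = A ↔ MapsTo (· + γ) A A := by
  refine ⟨fun h => mapsTo_iff_image_subset.2 h.subset, fun h => ?_⟩
  refine (mapsTo_iff_image_subset.1 h).antisymm fun a ha => ?_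
  exact ⟨a - γ, hA (sub_le_self a hγ) ha, sub_add_cancel a γ⟩

theorem mapsTo_add_right_of_le (hA : IsLowerSet A) {δ ε : Γ} (hδε : δ ≤ ε)
    (hε : MapsTo (· + ε) A A) : MapsTo (· + δ) A A :=
  fun a ha => hA (add_le_add_right hδε a) (hε ha)

end IsLowerSet

theorem Set.MapsTo.add_right_nsmul {M : Type*} [AddMonoid M] {A : Set M} {γ : M}
    (h : MapsTo (· + γ) A A) (n : ℕ) : MapsTo (· + n • γ) A A := by
  simpa only [add_right_iterate] using h.iterate n

theorem stmt_10_general {Γ : Type*} [AddCommGroup Γ] [LinearOrder Γ] [IsOrderedAddMonoid Γ]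
    (A : Set Γ) (hdc : ∀ a ∈ A, ∀ b : Γ, b ≤ a → b ∈ A) :
    (∀ γ ∈ {γ : Γ | 0 < γ ∧ (fun a => a + γ) '' A ≠ A}, ∀ δ : Γ, 0 ≤ δ →
      γ + δ ∈ {γ : Γ | 0 < γ ∧ (fun a => a + γ) '' A ≠ A}) ∧
    (∀ (n : ℕ) (γ : Γ), 0 < n → 0 < γ →
      n • γ ∈ {γ : Γ | 0 < γ ∧ (fun a => a + γ) '' A ≠ A} →
      γ ∈ {γ : Γ | 0 < γ ∧ (fun a => a + γ) '' A ≠ A}) := by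
  have hA : IsLowerSet A := fun a b hba ha => hdc a ha b hba
  constructor
  · rintro γ ⟨hγ, hγA⟩ δ hδ
    have hγδ : 0 < γ + δ := add_pos_of_pos_of_nonneg hγ hδ
    refine ⟨hγδ, fun h => hγA ?_⟩
    rw [hA.image_add_right_eq_iff_mapsTo hγδ.le] at h
    rw [hA.image_add_right_eq_iff_mapsTo hγ.le]
    exact hA.mapsTo_add_right_of_le (le_add_of_nonneg_right hδ) h
  · rintro n γ - hγ ⟨hnγ, hnγA⟩
    refine ⟨hγ, fun h => hnγA ?_⟩
    rw [hA.image_add_right_eq_iff_mapsTo hγ.le] at h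
    rw [hA.image_add_right_eq_iff_mapsTo hnγ.le]
    exact h.add_right_nsmul n

/-- For a cut `A` of a divisible linearly ordered abelian group `Γ`, the set
`p = {γ > 0 | A + γ ≠ A}` is an ideal of the monoid of positive elements, and it is
saturated (equivalently, prime). -/
theorem stmt_10 {Γ : Type*} [AddCommGroup Γ] [LinearOrder Γ] [IsOrderedAddMonoid Γ]
    (hdiv : ∀ (x : Γ) (n : ℕ), 0 < n → ∃ y : Γ, n • y = x)
    (A : Set Γ) (hne : A.Nonempty) (hdc : ∀ a ∈ A, ∀ b : Γ, b ≤ a → b ∈ A)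
    (hne' : Aᶜ.Nonempty)
    (hnomax : ¬ ∃ a ∈ A, ∀ a' ∈ A, a' ≤ a)
    (hnomin : ¬ ∃ b ∈ Aᶜ, ∀ b' ∈ Aᶜ, b ≤ b') :
    (∀ γ ∈ {γ : Γ | 0 < γ ∧ (fun a => a + γ) '' A ≠ A}, ∀ δ : Γ, 0 ≤ δ →
      γ + δ ∈ {γ : Γ | 0 < γ ∧ (fun a => a + γ) '' A ≠ A}) ∧
    (∀ (n : ℕ) (γ : Γ), 0 < n → 0 < γ →
      n • γ ∈ {γ : Γ | 0 < γ ∧ (fun a => a + γ) '' A ≠ A} →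
      γ ∈ {γ : Γ | 0 < γ ∧ (fun a => a + γ) '' A ≠ A}) :=
  stmt_10_general A hdc
end

section
/- Let Γ be a divisible linearly ordered abelian group and A ⊆ Γ a nonempty, downward closed, proper subset of Γ (a one-sided description of a ranger). Then there exists a linear order on the abelian group Γ × ℤ making it a linearly ordered abelian group such that the embedding γ ↦ (γ, 0) is an order embedding of Γ, and such that the element t = (0, 1) realizes A: for all γ ∈ Γ, γ ∈ A if and only if (γ, 0) < t. -/
/-!
Read `(δ, m) ∈ Γ × ℤ` as `δ + m t`, where `t` is to fill the cut between `A` and `Aᶜ`.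
Declare `δ + m t ≥ 0` when `δ + m c ≥ 0` for all `c` near the cut, i.e. for all `c` in some
interval `[a, b]` with `a ∈ A` and `b ∉ A`; as `c ↦ δ + m c` is monotone, it is enough to test
the endpoints. Any two such intervals have a common refinement, which makes these elements closed
under addition; if both `x` and `-x` qualify, then `δ + m c` vanishes at both endpoints, so
`m • (b - a) = 0` and `x = 0`. Divisibility gives totality: for `m ≠ 0` the root `c = -δ / m`
lies on one side of the cut and can replace the endpoint on that side.
-/

open Set

theorem IsLowerSet.lt_of_mem_of_notMem {α : Type*} [LinearOrder α] {s : Set α}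
    (hs : IsLowerSet s) {a b : α} (ha : a ∈ s) (hb : b ∉ s) : a < b :=
  lt_of_not_ge fun hba => hb (hs hba ha)

namespace CutExtension

section AddCommGroup

variable {Γ : Type*} [AddCommGroup Γ]

def evalAt (c : Γ) : Γ × ℤ →+ Γ :=
  AddMonoidHom.mk' (fun x => x.1 + x.2 • c) fun x y => by
    simp only [Prod.fst_add, Prod.snd_add, add_zsmul]; abel

@[simp] lemma evalAt_apply (c : Γ) (x : Γ × ℤ) : evalAt c x = x.1 + x.2 • c := rfl

lemma evalAt_sub_evalAt (c d : Γ) (x : Γ × ℤ) : evalAt c x - evalAt d x = x.2 • (c - d) := by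
  simp only [evalAt_apply, zsmul_sub]; abel

lemma exists_zsmul_eq (hdiv : ∀ (x : Γ) (n : ℕ), 0 < n → ∃ y : Γ, n • y = x) (δ : Γ) {m : ℤ}
    (hm : m ≠ 0) : ∃ y : Γ, m • y = δ := by
  obtain ⟨y, hy⟩ := hdiv δ m.natAbs (Int.natAbs_pos.2 hm)
  rcases Int.natAbs_eq m with h | h
  · exact ⟨y, by rw [h, natCast_zsmul, hy]⟩
  · exact ⟨-y, by rw [h, neg_smul, smul_neg, neg_neg, natCast_zsmul, hy]⟩

end AddCommGroup

variable {Γ : Type*} [AddCommGroup Γ] [LinearOrder Γ]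

def cutNonneg (A : Set Γ) : Set (Γ × ℤ) :=
  {x | ∃ a ∈ A, ∃ b ∉ A, 0 ≤ evalAt a x ∧ 0 ≤ evalAt b x}

variable {A : Set Γ}

lemma mem_cutNonneg {x : Γ × ℤ} :
    x ∈ cutNonneg A ↔ ∃ a ∈ A, ∃ b ∉ A, 0 ≤ evalAt a x ∧ 0 ≤ evalAt b x :=
  Iff.rfl

lemma mk_zero_mem_cutNonneg (hne : A.Nonempty) (hne' : Aᶜ.Nonempty) (γ : Γ) :
    (γ, (0 : ℤ)) ∈ cutNonneg A ↔ 0 ≤ γ := by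
  obtain ⟨a, ha⟩ := hne
  obtain ⟨b, hb⟩ := hne'
  simp only [mem_cutNonneg, evalAt_apply, zero_smul, add_zero, and_self]
  exact ⟨fun ⟨_, _, _, _, h⟩ => h, fun h => ⟨a, ha, b, hb, h⟩⟩

variable [IsOrderedAddMonoid Γ]

lemma evalAt_nonneg_of_mem_Icc {a b c : Γ} {x : Γ × ℤ} (hc : c ∈ Icc a b)
    (ha : 0 ≤ evalAt a x) (hb : 0 ≤ evalAt b x) : 0 ≤ evalAt c x := by
  rcases le_total 0 x.2 with hm | hm
  · have h : 0 ≤ evalAt c x - evalAt a x := by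
      rw [evalAt_sub_evalAt]; exact zsmul_nonneg (sub_nonneg.2 hc.1) hm
    exact ha.trans (sub_nonneg.1 h)
  · have h : 0 ≤ evalAt c x - evalAt b x := by
      rw [evalAt_sub_evalAt, ← neg_sub b c, zsmul_neg, ← neg_zsmul]
      exact zsmul_nonneg (sub_nonneg.2 hc.2) (neg_nonneg.2 hm)
    exact hb.trans (sub_nonneg.1 h)

lemma exists_common_endpoints (hA : IsLowerSet A) {x y : Γ × ℤ} (hx : x ∈ cutNonneg A)
    (hy : y ∈ cutNonneg A) :
    ∃ a ∈ A, ∃ b ∉ A,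
      0 ≤ evalAt a x ∧ 0 ≤ evalAt b x ∧ 0 ≤ evalAt a y ∧ 0 ≤ evalAt b y := by
  obtain ⟨a, ha, b, hb, hxa, hxb⟩ := hx
  obtain ⟨a', ha', b', hb', hya, hyb⟩ := hy
  have hmax : max a a' ∈ A := max_rec' (· ∈ A) ha ha'
  have hmin : min b b' ∉ A := min_rec' (· ∉ A) hb hb'
  refine ⟨max a a', hmax, min b b', hmin,
    evalAt_nonneg_of_mem_Icc ⟨le_max_left a a', (hA.lt_of_mem_of_notMem hmax hb).le⟩ hxa hxb,
    evalAt_nonneg_of_mem_Icc ⟨(hA.lt_of_mem_of_notMem ha hmin).le, min_le_left b b'⟩ hxa hxb,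
    evalAt_nonneg_of_mem_Icc ⟨le_max_right a a', (hA.lt_of_mem_of_notMem hmax hb').le⟩ hya hyb,
    evalAt_nonneg_of_mem_Icc ⟨(hA.lt_of_mem_of_notMem ha' hmin).le, min_le_right b b'⟩ hya hyb⟩

def cutCone (hA : IsLowerSet A) (hne : A.Nonempty) (hne' : Aᶜ.Nonempty) :
    AddGroupCone (Γ × ℤ) where
  carrier := cutNonneg A
  zero_mem' := by
    obtain ⟨a, ha⟩ := hne
    obtain ⟨b, hb⟩ := hne'
    exact ⟨a, ha, b, hb, by simp, by simp⟩
  add_mem' {x y} hx hy := by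
    obtain ⟨a, ha, b, hb, hxa, hxb, hya, hyb⟩ := exists_common_endpoints hA hx hy
    exact ⟨a, ha, b, hb, by simpa only [map_add] using add_nonneg hxa hya,
      by simpa only [map_add] using add_nonneg hxb hyb⟩
  eq_zero_of_mem_of_neg_mem' {x} hx hnx := by
    obtain ⟨a, ha, b, hb, hxa, hxb, hnxa, hnxb⟩ := exists_common_endpoints hA hx hnx
    rw [map_neg, neg_nonneg] at hnxa hnxb
    have hxa0 := le_antisymm hnxa hxa
    have hm : x.2 = 0 := by
      have h := evalAt_sub_evalAt b a x
      rw [hxa0, le_antisymm hnxb hxb, sub_self] at h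
      exact (smul_eq_zero.1 h.symm).resolve_right
        (sub_ne_zero.2 (hA.lt_of_mem_of_notMem ha hb).ne')
    ext
    · simpa [hm] using hxa0
    · exact hm

lemma mem_cutCone {hA : IsLowerSet A} {hne : A.Nonempty} {hne' : Aᶜ.Nonempty} {x : Γ × ℤ} :
    x ∈ cutCone hA hne hne' ↔ x ∈ cutNonneg A :=
  Iff.rfl

lemma mem_or_neg_mem_cutNonneg (hdiv : ∀ (x : Γ) (n : ℕ), 0 < n → ∃ y : Γ, n • y = x)
    (hne : A.Nonempty) (hne' : Aᶜ.Nonempty) (x : Γ × ℤ) :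
    x ∈ cutNonneg A ∨ -x ∈ cutNonneg A := by
  suffices ∃ a ∈ A, ∃ b ∉ A, (0 ≤ evalAt a x ∧ 0 ≤ evalAt b x) ∨
      (evalAt a x ≤ 0 ∧ evalAt b x ≤ 0) by
    obtain ⟨a, ha, b, hb, h | h⟩ := this
    · exact .inl ⟨a, ha, b, hb, h⟩
    · exact .inr ⟨a, ha, b, hb, by simpa only [map_neg, neg_nonneg] using h⟩
  obtain ⟨a, ha⟩ := hne
  obtain ⟨b, hb⟩ := hne'
  by_cases hm : x.2 = 0
  · have hconst : ∀ c, evalAt c x = x.1 := fun c => by simp [hm]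
    simp only [hconst]
    exact ⟨a, ha, b, hb, (le_total 0 x.1).imp (fun h => ⟨h, h⟩) fun h => ⟨h, h⟩⟩
  obtain ⟨c, hc⟩ := exists_zsmul_eq hdiv (-x.1) hm
  have hroot : evalAt c x = 0 := by simp [hc]
  by_cases hcA : c ∈ A
  · exact ⟨c, hcA, b, hb, by simp only [hroot, le_refl, true_and]; exact le_total 0 _⟩
  · exact ⟨a, ha, c, hcA, by simp only [hroot, le_refl, and_true]; exact le_total 0 _⟩

lemma neg_mk_one_mem_cutNonneg (hA : IsLowerSet A) (hne' : Aᶜ.Nonempty) (γ : Γ) :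
    (-γ, (1 : ℤ)) ∈ cutNonneg A ↔ γ ∈ A := by
  obtain ⟨b, hb⟩ := hne'
  simp only [mem_cutNonneg, evalAt_apply, one_smul, neg_add_eq_sub, sub_nonneg]
  exact ⟨fun ⟨a, ha, _, _, hγa, _⟩ => hA hγa ha,
    fun hγ => ⟨γ, hγ, b, hb, le_rfl, (hA.lt_of_mem_of_notMem hγ hb).le⟩⟩

end CutExtension

open CutExtension in
/-- Any nonempty, downward closed, proper subset `A` of a divisible linearly ordered
abelian group `Γ` is realized by an element `t = (0,1)` of `Γ × ℤ` for a suitable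
linear group order on `Γ × ℤ` extending that of `Γ`. -/
theorem stmt_11 {Γ : Type*} [AddCommGroup Γ] [LinearOrder Γ] [IsOrderedAddMonoid Γ]
    (hdiv : ∀ (x : Γ) (n : ℕ), 0 < n → ∃ y : Γ, n • y = x)
    (A : Set Γ) (hne : A.Nonempty) (hdc : ∀ a ∈ A, ∀ b : Γ, b ≤ a → b ∈ A)
    (hproper : A ≠ Set.univ) :
    ∃ r : Γ × ℤ → Γ × ℤ → Prop,
      IsLinearOrder (Γ × ℤ) r ∧
      (∀ a b c : Γ × ℤ, r a b → r (a + c) (b + c)) ∧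
      (∀ γ γ' : Γ, γ ≤ γ' ↔ r (γ, 0) (γ', 0)) ∧
      (∀ γ : Γ, γ ∈ A ↔ (r (γ, 0) ((0 : Γ), (1 : ℤ)) ∧ (γ, (0 : ℤ)) ≠ ((0 : Γ), (1 : ℤ)))) := by
  have hA : IsLowerSet A := fun a b hba ha => hdc a ha b hba
  have hne' : Aᶜ.Nonempty := Set.nonempty_compl.2 hproper
  let C := cutCone hA hne hne'
  have : HasMemOrNegMem C := ⟨mem_or_neg_mem_cutNonneg hdiv hne hne'⟩
  classical
  let o := LinearOrder.mkOfAddGroupCone C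
  refine ⟨o.le, @instIsLinearOrderLe _ o, fun a b c h => ?_, fun γ γ' => ?_, fun γ => ?_⟩
  · simpa using h
  · change γ ≤ γ' ↔ (γ', (0 : ℤ)) - (γ, 0) ∈ C
    rw [Prod.mk_sub_mk, sub_zero, mem_cutCone, mk_zero_mem_cutNonneg hne hne', sub_nonneg]
  · change γ ∈ A ↔ ((0 : Γ), (1 : ℤ)) - (γ, 0) ∈ C ∧ _
    rw [Prod.mk_sub_mk, zero_sub, sub_zero, mem_cutCone, neg_mk_one_mem_cutNonneg hA hne',
      and_iff_left (by simp)]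
end

section
/- Let Γ be a linearly ordered abelian group and H ⊊ H' two convex subgroups of Γ. Then H and H' are adjacent (there is no convex subgroup K with H ⊊ K ⊊ H') if and only if there exists γ ∈ Γ with γ > 0 such that H = {x ∈ Γ : ∀ n ∈ ℕ, n•|x| < γ} and H' = {x ∈ Γ : ∃ n ∈ ℕ, |x| ≤ n•γ}, where |x| = max(x, −x). -/
/-!
Given `γ > 0`, the elements bounded by a multiple of `γ` form the smallest convex subgroup
containing `γ`, and the elements infinitesimal with respect to `γ` form the largest convex
subgroup missing `γ`. If `H ⊊ H'` are adjacent, any `γ > 0` in `H' \ H` sandwiches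
`H ≤ infinitesimal γ < convexSpan γ ≤ H'`, so adjacency forces both inequalities to be equalities.
Conversely a convex subgroup strictly above `infinitesimal γ` contains `γ`, hence all of
`convexSpan γ`.
-/

/-- A convex additive subgroup. -/
def AddSubgroup.IsConvex {Γ : Type*} [AddCommGroup Γ] [LinearOrder Γ] [IsOrderedAddMonoid Γ] (H : AddSubgroup Γ) : Prop :=
  ∀ x h : Γ, h ∈ H → 0 ≤ x → x ≤ h → x ∈ H

namespace AddSubgroup

variable {Γ : Type*} [AddCommGroup Γ] [LinearOrder Γ] [IsOrderedAddMonoid Γ]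

theorem IsConvex.mem_of_abs_le {K : AddSubgroup Γ} (hK : K.IsConvex) {x h : Γ} (hh : h ∈ K)
    (hx : |x| ≤ h) : x ∈ K :=
  abs_mem_iff.mp (hK |x| h hh (abs_nonneg x) hx)

def convexSpan (γ : Γ) : AddSubgroup Γ where
  carrier := {x | ∃ n : ℕ, |x| ≤ n • γ}
  zero_mem' := ⟨0, by simp⟩
  add_mem' := by
    rintro a b ⟨m, hm⟩ ⟨n, hn⟩
    exact ⟨m + n, (abs_add_le a b).trans (by rw [add_smul]; exact add_le_add hm hn)⟩
  neg_mem' := by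
    rintro a ⟨n, hn⟩
    exact ⟨n, by simpa using hn⟩

def infinitesimal (γ : Γ) (hγ : 0 < γ) : AddSubgroup Γ where
  carrier := {x | ∀ n : ℕ, n • |x| < γ}
  zero_mem' := fun n => by simpa using hγ
  add_mem' := by
    intro a b ha hb n
    calc n • |a + b| ≤ n • (max |a| |b| + max |a| |b|) :=
          nsmul_le_nsmul_right ((abs_add_le a b).trans (add_le_add (le_max_left ..)
            (le_max_right ..))) n
      _ = (2 * n) • max |a| |b| := by rw [nsmul_add, two_mul, add_nsmul]
      _ < γ := by rcases max_choice |a| |b| with h | h <;> rw [h]; exacts [ha _, hb _]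
  neg_mem' := by
    intro a ha n
    simpa using ha n

theorem convexSpan_isConvex (γ : Γ) : (convexSpan γ).IsConvex := by
  rintro x h ⟨n, hn⟩ hx hxh
  refine ⟨n, le_trans ?_ hn⟩
  rw [abs_of_nonneg hx]
  exact hxh.trans (le_abs_self h)

theorem infinitesimal_isConvex {γ : Γ} (hγ : 0 < γ) : (infinitesimal γ hγ).IsConvex := by
  intro x h hh hx hxh n
  have hxh' : |x| ≤ |h| := by rw [abs_of_nonneg hx]; exact hxh.trans (le_abs_self h)
  exact (nsmul_le_nsmul_right hxh' n).trans_lt (hh n)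

theorem self_mem_convexSpan {γ : Γ} (hγ : 0 ≤ γ) : γ ∈ convexSpan γ :=
  ⟨1, by rw [abs_of_nonneg hγ, one_nsmul]⟩

theorem self_notMem_infinitesimal {γ : Γ} (hγ : 0 < γ) : γ ∉ infinitesimal γ hγ := fun h =>
  (h 1).ne (by rw [abs_of_pos hγ, one_nsmul])

theorem infinitesimal_le_convexSpan {γ : Γ} (hγ : 0 < γ) : infinitesimal γ hγ ≤ convexSpan γ :=
  fun x hx => ⟨1, by simpa using (hx 1).le⟩

theorem IsConvex.convexSpan_le_iff {K : AddSubgroup Γ} (hK : K.IsConvex) {γ : Γ} (hγ : 0 ≤ γ) :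
    convexSpan γ ≤ K ↔ γ ∈ K := by
  refine ⟨fun h => h (self_mem_convexSpan hγ), fun hγK x ⟨n, hn⟩ => ?_⟩
  exact hK.mem_of_abs_le (nsmul_mem hγK n) hn

theorem IsConvex.le_infinitesimal_iff {K : AddSubgroup Γ} (hK : K.IsConvex) {γ : Γ}
    (hγ : 0 < γ) : K ≤ infinitesimal γ hγ ↔ γ ∉ K := by
  refine ⟨fun h hγK => self_notMem_infinitesimal hγ (h hγK), fun hγK x hx n => ?_⟩
  by_contra! hn
  exact hγK (hK.mem_of_abs_le (nsmul_mem (abs_mem_iff.mpr hx) n) (by rwa [abs_of_pos hγ]))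

theorem IsConvex.exists_eq_infinitesimal_of_adjacent {H H' : AddSubgroup Γ} (hH : H.IsConvex)
    (hH' : H'.IsConvex) (hlt : H < H')
    (hadj : ¬ ∃ K : AddSubgroup Γ, K.IsConvex ∧ H < K ∧ K < H') :
    ∃ γ, ∃ hγ : 0 < γ, H = infinitesimal γ hγ ∧ H' = convexSpan γ := by
  obtain ⟨γ₀, hγ₀H', hγ₀H⟩ := SetLike.exists_of_lt hlt
  set γ := |γ₀|
  have hγH' : γ ∈ H' := abs_mem_iff.mpr hγ₀H'
  have hγH : γ ∉ H := fun h => hγ₀H (abs_mem_iff.mp h)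
  have hγ : 0 < γ := abs_pos.mpr fun h => hγ₀H (h ▸ H.zero_mem)
  have hHinf : H ≤ infinitesimal γ hγ := (hH.le_infinitesimal_iff hγ).mpr hγH
  have hspanH' : convexSpan γ ≤ H' := (hH'.convexSpan_le_iff hγ.le).mpr hγH'
  have hinfspan := infinitesimal_le_convexSpan hγ
  refine ⟨γ, hγ, ?_, ?_⟩
  · refine hHinf.eq_of_not_lt fun hlt' => hadj ⟨_, infinitesimal_isConvex hγ, hlt', ?_⟩
    exact lt_of_le_of_ne (hinfspan.trans hspanH') fun h =>
      self_notMem_infinitesimal hγ (h ▸ hγH')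
  · refine (hspanH'.eq_of_not_lt fun hlt' => hadj ⟨_, convexSpan_isConvex γ, ?_, hlt'⟩).symm
    exact lt_of_le_of_ne (hHinf.trans hinfspan) fun h =>
      hγH (h ▸ self_mem_convexSpan hγ.le)

theorem not_exists_isConvex_between_infinitesimal_convexSpan {γ : Γ} (hγ : 0 < γ) :
    ¬ ∃ K : AddSubgroup Γ, K.IsConvex ∧ infinitesimal γ hγ < K ∧ K < convexSpan γ := by
  rintro ⟨K, hK, hinfK, hKspan⟩
  have hγK : γ ∈ K := by
    by_contra hγK
    exact hinfK.not_ge ((hK.le_infinitesimal_iff hγ).mpr hγK)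
  exact hKspan.not_ge ((hK.convexSpan_le_iff hγ.le).mpr hγK)

end AddSubgroup

/-- Two convex subgroups `H ⊊ H'` are adjacent (no convex subgroup strictly in
between) iff there is `γ > 0` with `H = {x | ∀ n, n•|x| < γ}` and
`H' = {x | ∃ n, |x| ≤ n•γ}`. -/
theorem stmt_12 {Γ : Type*} [AddCommGroup Γ] [LinearOrder Γ] [IsOrderedAddMonoid Γ]
    (H H' : AddSubgroup Γ) (hH : H.IsConvex) (hH' : H'.IsConvex)
    (hlt : (H : Set Γ) ⊂ (H' : Set Γ)) :
    (¬ ∃ K : AddSubgroup Γ, K.IsConvex ∧ (H : Set Γ) ⊂ (K : Set Γ) ∧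
        (K : Set Γ) ⊂ (H' : Set Γ)) ↔
      ∃ γ : Γ, 0 < γ ∧ (H : Set Γ) = {x : Γ | ∀ n : ℕ, n • |x| < γ} ∧
        (H' : Set Γ) = {x : Γ | ∃ n : ℕ, |x| ≤ n • γ} := by
  simp only [SetLike.coe_ssubset_coe] at hlt ⊢
  constructor
  · intro hadj
    obtain ⟨γ, hγ, rfl, rfl⟩ := hH.exists_eq_infinitesimal_of_adjacent hH' hlt hadj
    exact ⟨γ, hγ, rfl, rfl⟩
  · rintro ⟨γ, hγ, hHinf, hH'span⟩
    obtain rfl : H = AddSubgroup.infinitesimal γ hγ := SetLike.coe_injective hHinf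
    obtain rfl : H' = AddSubgroup.convexSpan γ := SetLike.coe_injective hH'span
    exact AddSubgroup.not_exists_isConvex_between_infinitesimal_convexSpan hγ
end

section
/- Let k be a field with a valuation v into a linearly ordered abelian group with zero Γ ∪ {0} (multiplicative notation), let Γ' ⊇ Γ be an ordered group extension, r ∈ Γ', and a, a' ∈ k. Let w_{a,r} and w_{a',r} be the monomial valuations on k[t] of radius r centered at a and a' respectively, defined by w_{a,r}(Σᵢ cᵢ (t−a)ⁱ) = maxᵢ v(cᵢ)·rⁱ. Then w_{a,r} = w_{a',r} as functions on k[t] if and only if v(a − a') ≤ r. -/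
/-!
Expanding `f` in powers of `t - a` is the Taylor shift `f ↦ f(t + a)`, so `w_{a,r}` is the Gauss
valuation `w_{0,r}` composed with that shift, and `w_{a,r} = w_{a',r} ∘ (shift by a - a')`.
The `i`-th coefficient of `p(t + c)` is `Σⱼ C(j+i, i) p_{j+i} cʲ`; as `v(n) ≤ 1` for integers `n`,
a shift by `c` with `v(c) ≤ r` does not increase the Gauss valuation, and shifting back by `-c`
shows it preserves it. Conversely, `w_{a',r}(t - a') = r`, while `w_{a,r}(t - a')` is at least
`v(a - a')`, the valuation of its constant term in powers of `t - a`.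
-/

open Polynomial

/-- The monomial valuation of radius `r` centered at `a`:
`w_{a,r}(Σ cᵢ (t−a)ⁱ) = maxᵢ v(cᵢ)·rⁱ`, computed via the expansion
`f = Σᵢ cᵢ (t − a)ⁱ` with `cᵢ = coeff i (f.comp (X + C a))`. -/
noncomputable def monomialVal {k : Type*} [Field k] {G : Type*} [CommGroup G] [LinearOrder G] [IsOrderedMonoid G]
    (v : Valuation k (WithZero G)) (r : G) (a : k) (f : Polynomial k) : WithZero G :=
  (f.comp (X + C a)).support.sup
    (fun i => v ((f.comp (X + C a)).coeff i) * ((r : WithZero G)) ^ i)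

namespace Valuation

variable {R Γ₀ : Type*} [Ring R] [LinearOrderedCommMonoidWithZero Γ₀] (v : Valuation R Γ₀)

theorem map_natCast_le_one (n : ℕ) : v n ≤ 1 := by
  induction n with
  | zero => simp
  | succ n ih => exact Nat.cast_succ (R := R) n ▸ v.map_add_le ih v.map_one.le

end Valuation

section GaussVal

variable {R Γ₀ : Type*} [CommRing R] [LinearOrderedCommGroupWithZero Γ₀]
  (v : Valuation R Γ₀) (r : Γ₀)

noncomputable def gaussVal (p : R[X]) : Γ₀ :=
  p.support.sup fun i => v (p.coeff i) * r ^ i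

variable {v r}

theorem gaussVal_le_iff {p : R[X]} {x : Γ₀} :
    gaussVal v r p ≤ x ↔ ∀ i, v (p.coeff i) * r ^ i ≤ x := by
  refine Finset.sup_le_iff.trans ⟨fun h i => ?_, fun h i _ => h i⟩
  by_cases hi : p.coeff i = 0
  · simp [hi]
  · exact h i (mem_support_iff.mpr hi)

theorem le_gaussVal (p : R[X]) (i : ℕ) : v (p.coeff i) * r ^ i ≤ gaussVal v r p :=
  gaussVal_le_iff.mp le_rfl i

theorem valuation_coeff_zero_le_gaussVal (p : R[X]) : v (p.coeff 0) ≤ gaussVal v r p := by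
  simpa using le_gaussVal (v := v) (r := r) p 0

theorem gaussVal_X : gaussVal v r X = r := by
  refine le_antisymm (gaussVal_le_iff.mpr fun i => ?_) ?_
  · rcases eq_or_ne i 1 with rfl | hi
    · simp
    · simp [coeff_X_of_ne_one hi]
  · simpa using le_gaussVal (v := v) (r := r) X 1

theorem gaussVal_taylor_le {c : R} (hc : v c ≤ r) (p : R[X]) :
    gaussVal v r (taylor c p) ≤ gaussVal v r p := by
  refine gaussVal_le_iff.mpr fun i => ?_
  rcases eq_zero_or_pos (r ^ i) with hr | hr
  · simp [hr]
  rw [taylor_coeff, eval_eq_sum_range, ← le_div_iff₀ hr]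
  refine v.map_sum_le fun j _ => (le_div_iff₀ hr).mpr ?_
  rw [hasseDeriv_coeff, v.map_mul, v.map_mul, v.map_pow]
  calc v ((j + i).choose i) * v (p.coeff (j + i)) * v c ^ j * r ^ i
      ≤ 1 * v (p.coeff (j + i)) * r ^ j * r ^ i := by
        gcongr
        exact v.map_natCast_le_one _
    _ = v (p.coeff (j + i)) * r ^ (j + i) := by rw [one_mul, mul_assoc, ← pow_add]
    _ ≤ gaussVal v r p := le_gaussVal p (j + i)

theorem gaussVal_taylor {c : R} (hc : v c ≤ r) (p : R[X]) :
    gaussVal v r (taylor c p) = gaussVal v r p := by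
  refine le_antisymm (gaussVal_taylor_le hc p) ?_
  calc gaussVal v r p = gaussVal v r (taylor (-c) (taylor c p)) := by
        rw [taylor_taylor, neg_add_cancel, taylor_zero]
    _ ≤ gaussVal v r (taylor c p) := gaussVal_taylor_le (by rwa [v.map_neg]) _

end GaussVal

theorem monomialVal_eq_gaussVal {k : Type*} [Field k] {G : Type*} [CommGroup G] [LinearOrder G]
    [IsOrderedMonoid G] (v : Valuation k (WithZero G)) (r : G) (a : k) (f : k[X]) :
    monomialVal v r a f = gaussVal v (r : WithZero G) (taylor a f) :=
  rfl

/-- Two monomial valuations of the same radius `r` centered at `a` and `a'` coincide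
iff `v(a − a') ≤ r`. -/
theorem stmt_15 {k : Type*} [Field k] {G : Type*} [CommGroup G] [LinearOrder G] [IsOrderedMonoid G]
    (v : Valuation k (WithZero G)) (r : G) (a a' : k) :
    (∀ f : Polynomial k, monomialVal v r a f = monomialVal v r a' f) ↔
      v (a - a') ≤ (r : WithZero G) := by
  simp only [monomialVal_eq_gaussVal]
  constructor
  · intro h
    have h_shift : taylor a (X - C a') = X + C (a - a') := by
      simp only [map_sub, taylor_X, taylor_C]
      ring
    calc v (a - a') = v ((X + C (a - a')).coeff 0) := by simp
      _ ≤ gaussVal v r (X + C (a - a')) := valuation_coeff_zero_le_gaussVal _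
      _ = gaussVal v r (taylor a' (X - C a')) := by rw [← h_shift, h]
      _ = r := by simp [gaussVal_X]
  · intro hc f
    rw [← sub_add_cancel a a', ← taylor_taylor, gaussVal_taylor hc]
end

section
/- Let T be a topological space and a, b ∈ T. Suppose I and J are two connected subspaces of T, both containing a and b, such that every point of I \ {a,b} separates a from b in T and every point of J \ {a,b} separates a from b in T (x separates a and b if a and b lie in different connected components of T \ {x}). Then I = J. -/
/-- `x` separates `a` and `b` in `T`: `a, b ≠ x` and `a` and `b` lie in different
connected components of `T \ {x}`. -/
def Separates {T : Type*} [TopologicalSpace T] (x a b : T) : Prop :=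
  a ∈ ({x}ᶜ : Set T) ∧ b ∈ ({x}ᶜ : Set T) ∧
    connectedComponentIn ({x}ᶜ : Set T) a ≠ connectedComponentIn ({x}ᶜ : Set T) b

lemma subset_of_sep {T : Type*} [TopologicalSpace T] (a b : T) (I K : Set T)
    (hK : IsConnected K) (haK : a ∈ K) (hbK : b ∈ K)
    (hIsep : ∀ x ∈ I \ {a, b}, Separates x a b) : I ⊆ K := by
  intro x hxI
  by_cases hx : x ∈ ({a, b} : Set T)
  · rcases hx with h | h <;> subst h <;> assumption
  by_contra hxK
  obtain ⟨_, _, hne⟩ := hIsep x ⟨hxI, hx⟩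
  have hKsub : K ⊆ ({x}ᶜ : Set T) := fun y hy hyx => hxK (by simpa using hyx ▸ hy)
  have hsub := hK.isPreconnected.subset_connectedComponentIn haK hKsub
  exact hne (connectedComponentIn_eq (hsub hbK))

/-- Uniqueness of quasi-segments: two connected subsets containing `a` and `b`, all
of whose other points separate `a` from `b`, coincide. -/
theorem stmt_19 {T : Type*} [TopologicalSpace T] (a b : T) (I J : Set T)
    (hI : IsConnected I) (hJ : IsConnected J)
    (haI : a ∈ I) (hbI : b ∈ I) (haJ : a ∈ J) (hbJ : b ∈ J)
    (hIsep : ∀ x ∈ I \ {a, b}, Separates x a b)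
    (hJsep : ∀ x ∈ J \ {a, b}, Separates x a b) :
    I = J := by
  exact le_antisymm (subset_of_sep a b I J hJ haJ hbJ hIsep)
    (subset_of_sep a b J I hI haI hbI hJsep)
end
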